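/- arXiv:1703.09005 — 2 statements merged into one kernel-verified Lean document; each statement's English description precedes it below -/
import Mathlib

section
/- If V : ℝⁿ → ℝ is a value function satisfying the dynamic programming principle and there exist C¹ functions V_n with ‖V − V_n‖_∞ → 0 and λV_n(x) − ∇V_n(x)·f(x,u) ≤ g(x,u) + ε_n on ℝⁿ×U with ε_n → 0, then any nonnegative measure μ with B*μ = δ_{x₀} (i.e., ∫(λφ − ∇φ·f) dμ = φ(x₀) for all φ ∈ C¹) satisfies V(x₀) ≤ ∫ g dμ. Hence P(x₀) := inf{⟨μ,g⟩ : B*μ = δ_{x₀}, μ ≥ 0} ≥ V(x₀). -/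
/-!
Testing the adjoint equation `B*μ = δ_{x₀}` against the approximate subsolution `V_k` gives
`V_k(x₀) = ∫ B V_k dμ ≤ ∫ g dμ + ε_k μ(univ)`; letting `k → ∞` yields `V(x₀) ≤ ∫ g dμ`.
The only subtle point is integrability of `B V_k`, which is not assumed: testing also against
`V_k + 1` changes the right-hand side by `1`, whereas a non-integrable `B V_k` would make both
integrals Bochner's junk value `0`.
-/

open MeasureTheory Set Filter Topology

theorem MeasureTheory.Integrable.of_integral_add_const_ne {α : Type*} [MeasurableSpace α]
    {μ : Measure α} [IsFiniteMeasure μ] {h : α → ℝ} {c : ℝ}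
    (hne : ∫ x, (h x + c) ∂μ ≠ ∫ x, h x ∂μ) : Integrable h μ := by
  by_contra hh
  have hhc : ¬ Integrable (fun x => h x + c) μ := fun hi =>
    hh ((hi.sub (integrable_const c)).congr (.of_forall fun x => by simp))
  exact hne (by rw [integral_undef hh, integral_undef hhc])

theorem MeasureTheory.integral_le_integral_add_of_ae_le {α : Type*} [MeasurableSpace α]
    {μ : Measure α} [IsFiniteMeasure μ] {h g : α → ℝ} {e : ℝ}
    (hh : Integrable h μ) (hg : Integrable g μ) (hle : ∀ᵐ x ∂μ, h x ≤ g x + e) :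
    ∫ x, h x ∂μ ≤ ∫ x, g x ∂μ + e * μ.real univ := by
  calc ∫ x, h x ∂μ ≤ ∫ x, (g x + e) ∂μ := integral_mono_ae hh (hg.add (integrable_const e)) hle
    _ = ∫ x, g x ∂μ + e * μ.real univ := by
      rw [integral_add hg (integrable_const e), integral_const, smul_eq_mul, mul_comm]

section OccupationMeasure

variable {E F : Type*} [NormedAddCommGroup E] [NormedSpace ℝ E]

/-- The operator `B φ (x, u) = λ φ(x) − ∇φ(x)·f(x, u)` of the linear-programming formulation. -/
noncomputable def discountedGenerator (lam : ℝ) (f : E × F → E) (φ : E → ℝ) (p : E × F) : ℝ :=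
  lam * φ p.1 - fderiv ℝ φ p.1 (f p)

def BoundedC1 (φ : E → ℝ) : Prop :=
  ContDiff ℝ 1 φ ∧ ∃ C, ∀ z, |φ z| + ‖fderiv ℝ φ z‖ ≤ C

theorem discountedGenerator_add_const (lam : ℝ) (f : E × F → E) (φ : E → ℝ) (c : ℝ) :
    discountedGenerator lam f (fun z => φ z + c) =
      fun p => discountedGenerator lam f φ p + lam * c := by
  ext p
  simp only [discountedGenerator, fderiv_add_const]
  ring

theorem BoundedC1.add_const {φ : E → ℝ} (hφ : BoundedC1 φ) (c : ℝ) :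
    BoundedC1 (fun z => φ z + c) := by
  obtain ⟨hφC1, C, hC⟩ := hφ
  refine ⟨hφC1.add contDiff_const, C + |c|, fun z => ?_⟩
  rw [fderiv_add_const]
  linarith [hC z, abs_add_le (φ z) c]

variable [MeasurableSpace E] [MeasurableSpace F]

/-- `B*μ = δ_{x₀}`, tested against the bounded `C¹` functions with bounded derivative. -/
def IsOccupationMeasure (lam : ℝ) (f : E × F → E) (x₀ : E) (μ : Measure (E × F)) : Prop :=
  ∀ φ, BoundedC1 φ → ∫ p, discountedGenerator lam f φ p ∂μ = φ x₀

namespace IsOccupationMeasure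

variable {lam : ℝ} {f : E × F → E} {x₀ : E} {μ : Measure (E × F)} [IsFiniteMeasure μ]

theorem integrable (hμ : IsOccupationMeasure lam f x₀ μ) {φ : E → ℝ} (hφ : BoundedC1 φ) :
    Integrable (discountedGenerator lam f φ) μ := by
  refine Integrable.of_integral_add_const_ne (c := lam * 1) ?_
  have hshift := hμ _ (hφ.add_const 1)
  rw [discountedGenerator_add_const] at hshift
  rw [hshift, hμ φ hφ]
  simp

theorem le_integral_add (hμ : IsOccupationMeasure lam f x₀ μ) {φ : E → ℝ} (hφ : BoundedC1 φ)
    {g : E × F → ℝ} (hg : Integrable g μ) {e : ℝ}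
    (hsub : ∀ᵐ p ∂μ, discountedGenerator lam f φ p ≤ g p + e) :
    φ x₀ ≤ ∫ p, g p ∂μ + e * μ.real univ :=
  hμ φ hφ ▸ integral_le_integral_add_of_ae_le (hμ.integrable hφ) hg hsub

end IsOccupationMeasure

end OccupationMeasure

theorem tendsto_of_forall_abs_sub_le {ι α : Type*} [SemilatticeSup ι] [Nonempty ι]
    {u : ι → α → ℝ} {v : α → ℝ} (huv : ∀ δ > (0 : ℝ), ∃ N, ∀ k ≥ N, ∀ z, |v z - u k z| ≤ δ)
    (z : α) : Tendsto (fun k => u k z) atTop (𝓝 (v z)) := by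
  refine Metric.tendsto_atTop.2 fun δ hδ => ?_
  obtain ⟨N, hN⟩ := huv (δ / 2) (half_pos hδ)
  refine ⟨N, fun k hk => ?_⟩
  rw [Real.dist_eq, abs_sub_comm]
  exact (hN k hk z).trans_lt (half_lt_self hδ)

theorem stmt_15_general {n m : ℕ} (lam : ℝ)
    (U : Set (Fin m → ℝ))
    (f : (Fin n → ℝ) × (Fin m → ℝ) → (Fin n → ℝ))
    (g : (Fin n → ℝ) × (Fin m → ℝ) → ℝ) (hgc : Continuous g) (hgb : ∃ C, ∀ p, |g p| ≤ C)
    (x₀ : Fin n → ℝ)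
    (V : (Fin n → ℝ) → ℝ)
    (Vn : ℕ → (Fin n → ℝ) → ℝ) (ε : ℕ → ℝ)
    (hVnC1 : ∀ k, ContDiff ℝ 1 (Vn k))
    (hVnb : ∀ k, ∃ C, ∀ z, |Vn k z| + ‖fderiv ℝ (Vn k) z‖ ≤ C)
    (hconv : ∀ δ > (0:ℝ), ∃ N, ∀ k ≥ N, ∀ z, |V z - Vn k z| ≤ δ)
    (hε : Filter.Tendsto ε Filter.atTop (nhds 0))
    (hsub : ∀ k, ∀ z : Fin n → ℝ, ∀ v ∈ U,
      lam * Vn k z - fderiv ℝ (Vn k) z (f (z, v)) ≤ g (z, v) + ε k)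
    (μ : Measure ((Fin n → ℝ) × (Fin m → ℝ))) [IsFiniteMeasure μ]
    (hμU : μ {p : (Fin n → ℝ) × (Fin m → ℝ) | p.2 ∉ U} = 0)
    (hB : ∀ φ : (Fin n → ℝ) → ℝ, ContDiff ℝ 1 φ →
      (∃ C, ∀ z, |φ z| + ‖fderiv ℝ φ z‖ ≤ C) →
      ∫ p, (lam * φ p.1 - fderiv ℝ φ p.1 (f p)) ∂μ = φ x₀) :
    V x₀ ≤ ∫ p, g p ∂μ := by
  have hμ : IsOccupationMeasure lam f x₀ μ := fun φ hφ => hB φ hφ.1 hφ.2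
  obtain ⟨C, hC⟩ := hgb
  have hg : Integrable g μ :=
    ⟨hgc.aestronglyMeasurable, .of_bounded (C := C) (.of_forall fun p => hC p)⟩
  have hU_ae : ∀ᵐ p ∂μ, p.2 ∈ U := measure_mono_null (fun p hp => hp) hμU
  have hVk : ∀ k, Vn k x₀ ≤ ∫ p, g p ∂μ + ε k * μ.real univ := fun k =>
    hμ.le_integral_add ⟨hVnC1 k, hVnb k⟩ hg (hU_ae.mono fun p hp => hsub k p.1 p.2 hp)
  have hlim : Tendsto (fun k => ∫ p, g p ∂μ + ε k * μ.real univ) atTop (𝓝 (∫ p, g p ∂μ)) := by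
    simpa using tendsto_const_nhds.add (hε.mul_const (μ.real univ))
  exact le_of_tendsto_of_tendsto' (tendsto_of_forall_abs_sub_le hconv x₀) hlim hVk

/-- If `V` admits approximate smooth subsolutions `V_k` (uniformly
convergent to `V`, with `λV_k − ∇V_k·f ≤ g + ε_k` and `ε_k → 0`), then every
nonnegative measure `μ` with `B*μ = δ_{x₀}` satisfies `V(x₀) ≤ ∫ g dμ`. -/
theorem stmt_15 {n m : ℕ} (lam : ℝ) (hlam : 0 < lam)
    (U : Set (Fin m → ℝ)) (hU : IsCompact U)
    (f : (Fin n → ℝ) × (Fin m → ℝ) → (Fin n → ℝ)) (hfc : Continuous f)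
    (g : (Fin n → ℝ) × (Fin m → ℝ) → ℝ) (hgc : Continuous g) (hgb : ∃ C, ∀ p, |g p| ≤ C)
    (x₀ : Fin n → ℝ)
    (V : (Fin n → ℝ) → ℝ)
    (Vn : ℕ → (Fin n → ℝ) → ℝ) (ε : ℕ → ℝ)
    (hVnC1 : ∀ k, ContDiff ℝ 1 (Vn k))
    (hVnb : ∀ k, ∃ C, ∀ z, |Vn k z| + ‖fderiv ℝ (Vn k) z‖ ≤ C)
    (hconv : ∀ δ > (0:ℝ), ∃ N, ∀ k ≥ N, ∀ z, |V z - Vn k z| ≤ δ)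
    (hε : Filter.Tendsto ε Filter.atTop (nhds 0))
    (hsub : ∀ k, ∀ z : Fin n → ℝ, ∀ v ∈ U,
      lam * Vn k z - fderiv ℝ (Vn k) z (f (z, v)) ≤ g (z, v) + ε k)
    (μ : Measure ((Fin n → ℝ) × (Fin m → ℝ))) [IsFiniteMeasure μ]
    (hμU : μ {p : (Fin n → ℝ) × (Fin m → ℝ) | p.2 ∉ U} = 0)
    (hB : ∀ φ : (Fin n → ℝ) → ℝ, ContDiff ℝ 1 φ →
      (∃ C, ∀ z, |φ z| + ‖fderiv ℝ φ z‖ ≤ C) →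
      ∫ p, (lam * φ p.1 - fderiv ℝ φ p.1 (f p)) ∂μ = φ x₀) :
    V x₀ ≤ ∫ p, g p ∂μ :=
  stmt_15_general lam U f g hgc hgb x₀ V Vn ε hVnC1 hVnb hconv hε hsub μ hμU hB
end

section
/- For the relaxed control system ẋ(t) = ∫_U f(x(t),u) dm_t(u) with a Young measure (relaxed control) m : [0,∞) → P(U), the relaxed occupation measure N^m defined by ⟨N^m, l⟩ = ∫₀^∞ e^{-λt} ∫_U l(x(t),u) dm_t(u) dt, for a trajectory remaining in compact X, satisfies ⟨N^m, Aφ⟩ = φ(x₀) for all φ ∈ C¹(X), i.e., A* N^m = δ_{x₀}. -/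
/-!
Put `F t = ∫ f(x t, u) dm_t(u)`, so that `x` is a primitive of the bounded measurable `F`.
Then `x` is Lipschitz, and so is `φ ∘ x` because `φ` is Lipschitz on the compact set `X`.
Hence `g t = e^{-λt} φ(x t)` is absolutely continuous on every `[0, T]`. By the Lebesgue
differentiation theorem, `ẋ = F` a.e., so `g' = -e^{-λt} ∫ (Aφ)(x t, u) dm_t(u)` a.e. The
fundamental theorem of calculus for absolutely continuous functions then gives
`∫₀ᵀ e^{-λt} ⟨m_t, Aφ(x t, ·)⟩ dt = φ(x₀) - e^{-λT} φ(x T)`, and the boundary term vanishes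
as `T → ∞` because `φ` is bounded on `X`.
-/

open MeasureTheory Real Set Filter Topology
open scoped NNReal

theorem ContDiffOn.locallyLipschitzOn_of_isOpen {E F : Type*} [NormedAddCommGroup E]
    [NormedSpace ℝ E] [NormedAddCommGroup F] [NormedSpace ℝ F] {φ : E → F} {s : Set E}
    (hs : IsOpen s) (hφ : ContDiffOn ℝ 1 φ s) :
    LocallyLipschitzOn s φ := fun y hy ↦ by
  obtain ⟨K, t, ht, hK⟩ := (hφ.contDiffAt (hs.mem_nhds hy)).exists_lipschitzOnWith
  exact ⟨K, t, nhdsWithin_le_nhds ht, hK⟩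

theorem integral_Ioi_eq_of_intervalIntegral_eq_sub {G g : ℝ → ℝ} {a c : ℝ}
    (hG : IntegrableOn G (Ioi a)) (hFTC : ∀ T ≥ a, ∫ t in a..T, G t = c - g T)
    (hg : Tendsto g atTop (𝓝 0)) : ∫ t in Ioi a, G t = c := by
  refine tendsto_nhds_unique (intervalIntegral_tendsto_integral_Ioi a hG tendsto_id) ?_
  have hlim : Tendsto (fun T ↦ c - g T) atTop (𝓝 c) := by
    simpa using tendsto_const_nhds.sub hg
  exact hlim.congr' ((eventually_ge_atTop a).mono fun T hT ↦ (hFTC T hT).symm)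

section Trajectory

variable {E : Type*} [NormedAddCommGroup E] [NormedSpace ℝ E] {x F : ℝ → E} {C : ℝ≥0}

theorem lipschitzOnWith_of_eq_integral (hFi : LocallyIntegrable F)
    (hFb : ∀ t, ‖F t‖ ≤ C) (hx : ∀ t ≥ 0, x t = x 0 + ∫ τ in 0..t, F τ) :
    LipschitzOnWith C x (Ici 0) := by
  have hint (a b : ℝ) : IntervalIntegrable F volume a b :=
    (hFi.integrableOn_isCompact isCompact_uIcc).intervalIntegrable
  refine LipschitzOnWith.of_dist_le_mul fun t ht τ hτ ↦ ?_
  rw [dist_eq_norm, hx t ht, hx τ hτ, add_sub_add_left_eq_sub,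
    intervalIntegral.integral_interval_sub_left (hint 0 t) (hint 0 τ),
    Real.dist_eq]
  exact intervalIntegral.norm_integral_le_of_norm_le_const fun s _ ↦ hFb s

theorem ae_hasDerivAt_of_eq_integral [CompleteSpace E] (hFi : LocallyIntegrable F)
    (hx : ∀ t ≥ 0, x t = x 0 + ∫ τ in 0..t, F τ) : ∀ᵐ t, 0 < t → HasDerivAt x (F t) t := by
  filter_upwards [LocallyIntegrable.ae_hasDerivAt_integral hFi] with t ht ht0
  refine ((ht 0).const_add (x 0)).congr_of_eventuallyEq ?_
  filter_upwards [lt_mem_nhds ht0] with τ hτ using hx τ hτ.le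

variable {X s : Set E} {φ : E → ℝ}

theorem intervalIntegral_discounted_generator_eq [CompleteSpace E] (hFi : LocallyIntegrable F)
    (hFb : ∀ t, ‖F t‖ ≤ C) (hx : ∀ t ≥ 0, x t = x 0 + ∫ τ in 0..t, F τ)
    (hX : IsCompact X) (hxX : ∀ t ≥ 0, x t ∈ X) (hs : IsOpen s) (hXs : X ⊆ s)
    (hφ : ContDiffOn ℝ 1 φ s) (lam : ℝ) {T : ℝ} (hT : 0 ≤ T) :
    ∫ t in 0..T, exp (-lam * t) * (lam * φ (x t) - fderiv ℝ φ (x t) (F t))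
      = φ (x 0) - exp (-lam * T) * φ (x T) := by
  obtain ⟨K, hK⟩ :=
    ((hφ.locallyLipschitzOn_of_isOpen hs).mono hXs).exists_lipschitzOnWith_of_compact hX
  have hφx : LipschitzOnWith (K * C) (φ ∘ x) (uIcc 0 T) :=
    (hK.comp (lipschitzOnWith_of_eq_integral hFi hFb hx) hxX).mono
      (by rw [uIcc_of_le hT]; exact Icc_subset_Ici_self)
  have hexp : ContDiffOn ℝ 1 (fun t ↦ exp (-lam * t)) (uIcc 0 T) := by fun_prop
  have hac := hexp.absolutelyContinuousOnInterval.fun_mul hφx.absolutelyContinuousOnInterval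
  have hFTC := hac.integral_deriv_eq_sub
  simp only [Function.comp_apply, mul_zero, exp_zero, one_mul] at hFTC
  rw [← neg_sub, ← hFTC, ← intervalIntegral.integral_neg]
  refine intervalIntegral.integral_congr_ae ?_
  filter_upwards [ae_hasDerivAt_of_eq_integral hFi hx] with t hxt htT
  have ht : 0 < t := (uIoc_of_le hT ▸ htT).1
  have hφt : HasFDerivAt φ (fderiv ℝ φ (x t)) (x t) :=
    ((hφ.contDiffAt (hs.mem_nhds (hXs (hxX t ht.le)))).differentiableAt
      one_ne_zero).hasFDerivAt
  have hd : HasDerivAt (fun i ↦ exp (-lam * i) * φ (x i))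
      (exp (-lam * t) * -lam * φ (x t) + exp (-lam * t) * fderiv ℝ φ (x t) (F t)) t := by
    simpa using
      ((hasDerivAt_id t).const_mul (-lam)).exp.fun_mul (hφt.comp_hasDerivAt t (hxt ht))
  rw [hd.deriv]
  ring

theorem integrableOn_Ioi_discounted_generator (hFi : LocallyIntegrable F)
    (hFb : ∀ t, ‖F t‖ ≤ C) (hx : ∀ t ≥ 0, x t = x 0 + ∫ τ in 0..t, F τ)
    (hX : IsCompact X) (hxX : ∀ t ≥ 0, x t ∈ X) (hs : IsOpen s) (hXs : X ⊆ s)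
    (hφ : ContDiffOn ℝ 1 φ s) {lam : ℝ} (hlam : 0 < lam) :
    IntegrableOn (fun t ↦ exp (-lam * t) * (lam * φ (x t) - fderiv ℝ φ (x t) (F t))) (Ioi 0) := by
  have hxc : ContinuousOn x (Ici 0) := (lipschitzOnWith_of_eq_integral hFi hFb hx).continuousOn
  have hxs : MapsTo x (Ici 0) s := fun t ht ↦ hXs (hxX t ht)
  have hDφ : ContinuousOn (fderiv ℝ φ) s := hφ.continuousOn_fderiv_of_isOpen hs le_rfl
  obtain ⟨M₀, hM₀⟩ := hX.exists_bound_of_continuousOn (hφ.continuousOn.mono hXs)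
  obtain ⟨M₁, hM₁⟩ := hX.exists_bound_of_continuousOn (hDφ.mono hXs)
  have hφx : AEStronglyMeasurable (fun t ↦ φ (x t)) (volume.restrict (Ioi 0)) :=
    ((hφ.continuousOn.comp hxc hxs).mono Ioi_subset_Ici_self).aestronglyMeasurable
      measurableSet_Ioi
  have hDφx : AEStronglyMeasurable (fun t ↦ fderiv ℝ φ (x t)) (volume.restrict (Ioi 0)) :=
    ((hDφ.comp hxc hxs).mono Ioi_subset_Ici_self).aestronglyMeasurable measurableSet_Ioi
  have hDφxF : AEStronglyMeasurable (fun t ↦ fderiv ℝ φ (x t) (F t)) (volume.restrict (Ioi 0)) :=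
    (ContinuousLinearMap.apply ℝ ℝ).flip.aestronglyMeasurable_comp₂ hDφx
      hFi.aestronglyMeasurable.restrict
  refine ((exp_neg_integrableOn_Ioi 0 hlam).const_mul (lam * M₀ + M₁ * C)).mono'
    ((continuous_exp.comp (continuous_const_mul (-lam))).aestronglyMeasurable.mul
      ((aestronglyMeasurable_const.mul hφx).sub hDφxF)) ?_
  refine (ae_restrict_iff' measurableSet_Ioi).2 (ae_of_all _ fun t ht ↦ ?_)
  have hxt := hxX t (le_of_lt ht)
  rw [norm_mul, norm_of_nonneg (exp_pos _).le, mul_comm]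
  gcongr
  calc ‖lam * φ (x t) - fderiv ℝ φ (x t) (F t)‖
      ≤ ‖lam * φ (x t)‖ + ‖fderiv ℝ φ (x t) (F t)‖ := norm_sub_le _ _
    _ ≤ lam * M₀ + M₁ * C := by
      gcongr
      · rw [norm_mul, norm_of_nonneg hlam.le]
        exact mul_le_mul_of_nonneg_left (hM₀ _ hxt) hlam.le
      · exact (ContinuousLinearMap.le_opNorm _ _).trans
          (mul_le_mul (hM₁ _ hxt) (hFb t) (norm_nonneg _) ((norm_nonneg _).trans (hM₁ _ hxt)))

theorem integral_Ioi_discounted_generator_eq [CompleteSpace E] (hFi : LocallyIntegrable F)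
    (hFb : ∀ t, ‖F t‖ ≤ C) (hx : ∀ t ≥ 0, x t = x 0 + ∫ τ in 0..t, F τ)
    (hX : IsCompact X) (hxX : ∀ t ≥ 0, x t ∈ X) (hs : IsOpen s) (hXs : X ⊆ s)
    (hφ : ContDiffOn ℝ 1 φ s) {lam : ℝ} (hlam : 0 < lam) :
    ∫ t in Ioi 0, exp (-lam * t) * (lam * φ (x t) - fderiv ℝ φ (x t) (F t)) = φ (x 0) := by
  refine integral_Ioi_eq_of_intervalIntegral_eq_sub
    (integrableOn_Ioi_discounted_generator hFi hFb hx hX hxX hs hXs hφ hlam)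
    (fun T hT ↦ intervalIntegral_discounted_generator_eq hFi hFb hx hX hxX hs hXs hφ lam hT) ?_
  obtain ⟨M, hM⟩ := hX.exists_bound_of_continuousOn (hφ.continuousOn.mono hXs)
  have hexp : Tendsto (fun T ↦ exp (-lam * T)) atTop (𝓝 0) :=
    tendsto_exp_atBot.comp (tendsto_id.const_mul_atTop_of_neg (neg_neg_of_pos hlam))
  refine squeeze_zero_norm' (a := fun T ↦ M * exp (-lam * T)) ?_ (by simpa using hexp.const_mul M)
  filter_upwards [eventually_ge_atTop 0] with T hT
  rw [norm_mul, norm_of_nonneg (exp_pos _).le, mul_comm]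
  exact mul_le_mul_of_nonneg_right (hM _ (hxX T hT)) (exp_pos _).le

end Trajectory

section RelaxedControl

variable {Y V : Type*} [TopologicalSpace Y] [FirstCountableTopology Y] [TopologicalSpace V]
  [MeasurableSpace V] [OpensMeasurableSpace V]

theorem continuous_integral_of_bounded {G : Type*} [NormedAddCommGroup G] [NormedSpace ℝ G]
    [SecondCountableTopologyEither V G] {g : Y × V → G} (hg : Continuous g) {C : ℝ}
    (hgb : ∀ p, ‖g p‖ ≤ C) (μ : Measure V) [IsFiniteMeasure μ] :
    Continuous fun y ↦ ∫ v, g (y, v) ∂μ :=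
  continuous_of_dominated (fun y ↦ (hg.comp (Continuous.prodMk_right y)).aestronglyMeasurable)
    (fun _ ↦ ae_of_all _ fun _ ↦ hgb _) (integrable_const C)
    (ae_of_all _ fun _ ↦ hg.comp (continuous_id.prodMk continuous_const))

theorem measurable_integral_comp_of_bounded [TopologicalSpace.MetrizableSpace Y]
    [SecondCountableTopology Y] [MeasurableSpace Y] [OpensMeasurableSpace Y]
    {ι : Type*} [Fintype ι] {ρ : ℝ → Measure V} [∀ t, IsFiniteMeasure (ρ t)]
    (hρ : ∀ h : V → ℝ, Continuous h → Measurable fun t ↦ ∫ v, h v ∂ρ t)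
    {g : Y × V → ι → ℝ} (hg : Continuous g) {C : ℝ} (hgb : ∀ p, ‖g p‖ ≤ C)
    {y : ℝ → Y} (hy : Measurable y) : Measurable fun t ↦ ∫ v, g (y t, v) ∂ρ t := by
  have hu : Measurable (Function.uncurry fun z t ↦ ∫ v, g (z, v) ∂ρ t) := by
    refine measurable_uncurry_of_continuous_of_measurable
      (fun t ↦ continuous_integral_of_bounded hg hgb (ρ t)) fun z ↦ ?_
    have hgz : Continuous fun v ↦ g (z, v) := hg.comp (Continuous.prodMk_right z)
    have hint (t : ℝ) : Integrable (fun v ↦ g (z, v)) (ρ t) :=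
      .of_bound hgz.aestronglyMeasurable C (ae_of_all _ fun _ ↦ hgb _)
    refine measurable_pi_iff.2 fun i ↦ ?_
    simp_rw [eval_integral (fun j ↦ (hint _).eval j) i]
    exact hρ _ ((continuous_apply i).comp hgz)
  exact hu.comp (hy.prodMk measurable_id)

end RelaxedControl

theorem integral_const_sub_clm_apply {V G : Type*} [MeasurableSpace V] {μ : Measure V}
    [IsProbabilityMeasure μ] [NormedAddCommGroup G] [NormedSpace ℝ G] [CompleteSpace G]
    {g : V → G} (hg : Integrable g μ) (c : ℝ) (L : G →L[ℝ] ℝ) :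
    ∫ v, (c - L (g v)) ∂μ = c - L (∫ v, g v ∂μ) := by
  rw [integral_sub (integrable_const c) (L.integrable_comp hg), integral_const,
    L.integral_comp_comm hg, probReal_univ, one_smul]

theorem stmt_19_general {n m : ℕ} (lam : ℝ) (hlam : 0 < lam)
    (X : Set (Fin n → ℝ)) (hX : IsCompact X)
    (f : (Fin n → ℝ) × (Fin m → ℝ) → (Fin n → ℝ))
    (hfc : Continuous f) (hfb : ∃ C, ∀ p, ‖f p‖ ≤ C)
    (x₀ : Fin n → ℝ)
    (ρ : ℝ → Measure (Fin m → ℝ))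
    (hρprob : ∀ t, IsProbabilityMeasure (ρ t))
    (hρmeas : ∀ h : (Fin m → ℝ) → ℝ, Continuous h →
      Measurable fun t => ∫ v, h v ∂(ρ t))
    (x : ℝ → Fin n → ℝ) (hxc : Continuous x) (hx0 : x 0 = x₀)
    (hsol : ∀ t ≥ (0:ℝ), x t = x₀ + ∫ τ in (0:ℝ)..t, (∫ v, f (x τ, v) ∂(ρ τ)))
    (hxX : ∀ t ≥ (0:ℝ), x t ∈ X)
    (s : Set (Fin n → ℝ)) (hs : IsOpen s) (hXs : X ⊆ s)
    (φ : (Fin n → ℝ) → ℝ) (hφ : ContDiffOn ℝ 1 φ s) :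
    ∫ t in Set.Ioi (0:ℝ),
        Real.exp (-lam * t) *
          (∫ v, (lam * φ (x t) - fderiv ℝ φ (x t) (f (x t, v))) ∂(ρ t)) = φ x₀ := by
  obtain ⟨C, hC⟩ := hfb
  have hfC (p) : ‖f p‖ ≤ C.toNNReal := (hC p).trans (Real.le_coe_toNNReal C)
  have hint (t : ℝ) : Integrable (fun v ↦ f (x t, v)) (ρ t) :=
    .of_bound (hfc.comp (Continuous.prodMk_right _)).aestronglyMeasurable C
      (ae_of_all _ fun _ ↦ hC _)
  set F : ℝ → Fin n → ℝ := fun t ↦ ∫ v, f (x t, v) ∂ρ t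
  have hFm : Measurable F := measurable_integral_comp_of_bounded hρmeas hfc hC hxc.measurable
  have hFb (t : ℝ) : ‖F t‖ ≤ C.toNNReal :=
    (norm_integral_le_of_norm_le_const (ae_of_all _ fun _ ↦ hfC _)).trans_eq (by simp)
  have hFi : LocallyIntegrable F :=
    (memLp_top_of_bound hFm.aestronglyMeasurable _ (ae_of_all _ hFb)).locallyIntegrable le_top
  have hxF : ∀ t ≥ 0, x t = x 0 + ∫ τ in 0..t, F τ := hx0 ▸ hsol
  rw [← hx0, ← integral_Ioi_discounted_generator_eq hFi hFb hxF hX hxX hs hXs hφ hlam]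
  refine setIntegral_congr_fun measurableSet_Ioi fun t _ ↦ ?_
  rw [integral_const_sub_clm_apply (hint t)]

/-- For the relaxed control system `ẋ = ∫_U f(x,u) dm_t(u)` with Young
measure `t ↦ ρ t`, the relaxed occupation measure satisfies `⟨N^m, Aφ⟩ = φ(x₀)` for all
`φ ∈ C¹(X)`, i.e. `A* N^m = δ_{x₀}`. -/
theorem stmt_19 {n m : ℕ} (lam : ℝ) (hlam : 0 < lam)
    (X : Set (Fin n → ℝ)) (hX : IsCompact X)
    (U : Set (Fin m → ℝ)) (hU : IsCompact U)
    (f : (Fin n → ℝ) × (Fin m → ℝ) → (Fin n → ℝ))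
    (hfc : Continuous f) (hfb : ∃ C, ∀ p, ‖f p‖ ≤ C)
    (hfLip : ∃ L, ∀ (y z : Fin n → ℝ) (v : Fin m → ℝ), v ∈ U →
      ‖f (y, v) - f (z, v)‖ ≤ L * ‖y - z‖)
    (x₀ : Fin n → ℝ) (hx₀ : x₀ ∈ X)
    (ρ : ℝ → Measure (Fin m → ℝ))
    (hρprob : ∀ t, IsProbabilityMeasure (ρ t))
    (hρU : ∀ t, ρ t Uᶜ = 0)
    (hρmeas : ∀ h : (Fin m → ℝ) → ℝ, Continuous h →
      Measurable fun t => ∫ v, h v ∂(ρ t))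
    (x : ℝ → Fin n → ℝ) (hxc : Continuous x) (hx0 : x 0 = x₀)
    (hsol : ∀ t ≥ (0:ℝ), x t = x₀ + ∫ τ in (0:ℝ)..t, (∫ v, f (x τ, v) ∂(ρ τ)))
    (hxX : ∀ t ≥ (0:ℝ), x t ∈ X)
    (s : Set (Fin n → ℝ)) (hs : IsOpen s) (hXs : X ⊆ s)
    (φ : (Fin n → ℝ) → ℝ) (hφ : ContDiffOn ℝ 1 φ s) :
    ∫ t in Set.Ioi (0:ℝ),
        Real.exp (-lam * t) *
          (∫ v, (lam * φ (x t) - fderiv ℝ φ (x t) (f (x t, v))) ∂(ρ t)) = φ x₀ :=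
  stmt_19_general lam hlam X hX f hfc hfb x₀ ρ hρprob hρmeas x hxc hx0 hsol hxX s hs hXs φ hφ
end
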